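/- arXiv:1401.5866 — 4 statements merged into one kernel-verified Lean document; each statement's English description precedes it below -/
import Mathlib

section
/- (Hurwitz's theorem for formal Laurent series.) For every f ∈ K ∖ 𝔽_q(t), there exist infinitely many rational functions P/Q with P, Q ∈ 𝔽_q[t], Q ≠ 0, such that |f − P/Q| < 1/|Q|². -/
/-!
Setting: `q` a prime power is formalized as `q = Fintype.card Fq` for a finite field `Fq`.
The field `K = 𝔽_q((t⁻¹))` of formal Laurent series in `t⁻¹` is realized as
`LaurentSeries Fq = 𝔽_q((X))` with `X = t⁻¹` (so `deg f = -(X-adic order of f)`).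
-/

open scoped Classical
open MeasureTheory Filter
open scoped ENNReal

noncomputable section

variable (Fq : Type) [Field Fq] [Fintype Fq]

/-- `t ∈ K = 𝔽_q((t⁻¹))`, realized as the inverse of the variable `X` of
`LaurentSeries Fq`. -/
def tvar : LaurentSeries Fq := (HahnSeries.single (1 : ℤ) (1 : Fq))⁻¹

/-- The degree `deg f ∈ ℤ ∪ {-∞}` of `f ∈ K`, with `deg 0 = ⊥ = -∞`. -/
def fdeg (f : LaurentSeries Fq) : WithBot ℤ :=
  if f = 0 then ⊥ else ((-f.order : ℤ) : WithBot ℤ)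

/-- The absolute value `|f| = q^(deg f)`, with `|0| = 0`. -/
def fabs (f : LaurentSeries Fq) : ℝ :=
  if f = 0 then 0 else (Fintype.card Fq : ℝ) ^ (-f.order)

/-- Keep only the part of `f` with `X`-exponents `≤ N`, i.e. `t`-exponents `≥ -N`. -/
def cutoff (N : ℤ) (f : LaurentSeries Fq) : LaurentSeries Fq where
  coeff j := if j ≤ N then f.coeff j else 0
  isPWO_support' := f.isPWO_support'.mono (by
    intro j hj
    by_cases hN : j ≤ N
    · simpa [Function.mem_support, hN] using hj
    · simp [Function.mem_support, hN] at hj)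

/-- The polynomial part `[f] ∈ 𝔽_q[t]` of `f` (the part with `t`-exponents `≥ 0`). -/
def polyPart (f : LaurentSeries Fq) : LaurentSeries Fq := cutoff Fq 0 f

/-- The fractional part `{f} = f - [f]`. -/
def fracPart (f : LaurentSeries Fq) : LaurentSeries Fq := f - polyPart Fq f

/-- `𝒪 = {f ∈ K : |f| ≤ 1}`. -/
def setO : Set (LaurentSeries Fq) := {f | fabs Fq f ≤ 1}

/-- `𝕃 = {f ∈ K : |f| < 1}`. -/
def setL : Set (LaurentSeries Fq) := {f | fabs Fq f < 1}

/-- `𝕁₀ = {f ∈ 𝒪 : deg f = 0}`. -/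
def setJ0 : Set (LaurentSeries Fq) := {f | fdeg Fq f = ((0 : ℤ) : WithBot ℤ)}

/-- The embedding `𝔽_q[t] → K`, sending a polynomial `P` to `P(t)`. -/
def polyT (P : Polynomial Fq) : LaurentSeries Fq := Polynomial.aeval (tvar Fq) P

/-- The subfield `𝔽_q(t) ⊆ K` of rational functions (as a subset). -/
def ratSet : Set (LaurentSeries Fq) :=
  {g | ∃ P Q : Polynomial Fq, Q ≠ 0 ∧ g = polyT Fq P / polyT Fq Q}

/-- The Artin map `Ψ(f) = {1/f}`. -/
def artin (f : LaurentSeries Fq) : LaurentSeries Fq := fracPart Fq f⁻¹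

/-- The partial quotients `A_n = [1/Ψ^{n-1}(f)]` (`n ≥ 1`). -/
def pquot (f : LaurentSeries Fq) (n : ℕ) : LaurentSeries Fq :=
  polyPart Fq (((artin Fq)^[n - 1] f)⁻¹)

/-- `convPQ f (k+1) = (P_k, Q_k)`, the principal convergents;
`convPQ f 0 = (P_{-1}, Q_{-1}) = (1, 0)`, `convPQ f 1 = (P_0, Q_0) = (0, 1)`. -/
def convPQ (f : LaurentSeries Fq) : ℕ → LaurentSeries Fq × LaurentSeries Fq
  | 0 => (1, 0)
  | 1 => (0, 1)
  | (n + 2) => (pquot Fq f (n + 1) * (convPQ f (n + 1)).1 + (convPQ f n).1,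
                pquot Fq f (n + 1) * (convPQ f (n + 1)).2 + (convPQ f n).2)

/-- `Pc f (k+1) = P_k`. -/
def Pc (f : LaurentSeries Fq) (n : ℕ) : LaurentSeries Fq := (convPQ Fq f n).1

/-- `Qc f (k+1) = Q_k`. -/
def Qc (f : LaurentSeries Fq) (n : ℕ) : LaurentSeries Fq := (convPQ Fq f n).2

/-- The geometric Farey map `F` on `𝕃 × ℤ`. -/
def fareyGeom (p : LaurentSeries Fq × ℤ) : LaurentSeries Fq × ℤ :=
  if fdeg Fq p.1 < ((-1 : ℤ) : WithBot ℤ) ∨ p.2 < 0 then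
    (fracPart Fq (tvar Fq * p.1), p.2 + 1)
  else
    (fracPart Fq ((tvar Fq * p.1)⁻¹), -(p.2 + 1))

/-- The algebraic Farey map `F_h` associated to `h`. -/
def fareyAlg (h : LaurentSeries Fq) (f : LaurentSeries Fq) : LaurentSeries Fq :=
  if fdeg Fq f = ((0 : ℤ) : WithBot ℤ) then
    (1 - polyPart Fq ((1 - h) * f⁻¹) * f) / f
  else
    f / (1 - polyPart Fq ((1 - h) * f⁻¹) * f)

/-- The matrix `M(f, n)` associated to the geometric Farey map. -/
def geomMat (p : LaurentSeries Fq × ℤ) : Matrix (Fin 2) (Fin 2) (LaurentSeries Fq) :=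
  if p.2 < 0 then
    !![(tvar Fq)⁻¹, (tvar Fq)⁻¹ * polyPart Fq (tvar Fq * p.1); 0, 1]
  else if fdeg Fq p.1 = ((-1 : ℤ) : WithBot ℤ) then
    !![0, 1; tvar Fq, tvar Fq * polyPart Fq ((tvar Fq * p.1)⁻¹)]
  else
    !![1, 0; 0, tvar Fq]

/-- The matrix `M_h(f)` associated to the algebraic Farey map `F_h`. -/
def algMat (h : LaurentSeries Fq) (f : LaurentSeries Fq) :
    Matrix (Fin 2) (Fin 2) (LaurentSeries Fq) :=
  if fdeg Fq f = ((0 : ℤ) : WithBot ℤ) then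
    !![0, 1; 1, polyPart Fq ((1 - h) * f⁻¹)]
  else
    !![1, 0; polyPart Fq ((1 - h) * f⁻¹), 1]

/-- The leading term `LT(f)` of `f`. -/
def leadTerm (f : LaurentSeries Fq) : LaurentSeries Fq :=
  HahnSeries.single f.order (f.coeff f.order)

/-- `G(f) = 1/f - 1/LT(f)`. -/
def Gmap (f : LaurentSeries Fq) : LaurentSeries Fq := f⁻¹ - (leadTerm Fq f)⁻¹

/-- The Farey map `F_𝕁` of Berthé–Nakada–Natsui. -/
def fareyBNN (f : LaurentSeries Fq) : LaurentSeries Fq :=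
  if ((0 : ℤ) : WithBot ℤ) ≤ fdeg Fq (Gmap Fq f) then (Gmap Fq f)⁻¹
  else f⁻¹ - polyPart Fq f⁻¹

/-- The Borel measurable structure on `K`, for the valued-field topology. -/
instance : MeasurableSpace (LaurentSeries Fq) := borel _
instance : BorelSpace (LaurentSeries Fq) := ⟨rfl⟩

/-!
Dirichlet's argument works verbatim in `𝔽_q((t⁻¹))`. For each `n`, asking that the coefficients
of `t⁻¹, …, t⁻ⁿ` in `f Q` vanish imposes `n` linear conditions on the `(n + 1)`-dimensional space
of polynomials `Q` of degree `≤ n`, so some `Q ≠ 0` satisfies them; with `P` the polynomial part of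
`f Q` this gives `|f Q - P| ≤ q^(-n-1)` and `|Q| ≤ qⁿ`, hence both `|f - P/Q| < 1/|Q|²` and
`|f - P/Q| < q^(-n)`. As `f` is irrational these distances are positive, and they tend to `0`,
so infinitely many distinct `P/Q` occur.
-/

open HahnSeries Polynomial

section

omit [Fintype Fq]

theorem tvar_eq_single : tvar Fq = single (-1 : ℤ) (1 : Fq) :=
  inv_eq_of_mul_eq_one_right <| by simp [single_mul_single, single_zero_one]

theorem polyT_monomial (k : ℕ) (a : Fq) : polyT Fq (monomial k a) = single (-(k : ℤ)) a := by
  rw [polyT, aeval_monomial, tvar_eq_single, single_pow, LaurentSeries.algebraMap_apply, C_apply,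
    single_mul_single]
  simp

theorem coeff_polyT (P : Fq[X]) (j : ℤ) :
    (polyT Fq P).coeff j = if j ≤ 0 then P.coeff (-j).toNat else 0 := by
  induction P using Polynomial.induction_on' with
  | add P R hP hR =>
    rw [show polyT Fq (P + R) = polyT Fq P + polyT Fq R from map_add _ P R,
      HahnSeries.coeff_add, hP, hR]
    split_ifs <;> simp
  | monomial k a =>
    rw [polyT_monomial, coeff_single, coeff_monomial]
    split_ifs <;> first | rfl | omega

theorem polyT_ne_zero {Q : Fq[X]} (hQ : Q ≠ 0) : polyT Fq Q ≠ 0 := by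
  intro h
  have := coeff_polyT Fq Q (-Q.natDegree)
  rw [h, HahnSeries.coeff_zero, if_pos (by omega), neg_neg, Int.toNat_natCast] at this
  exact leadingCoeff_ne_zero.2 hQ this.symm

theorem order_polyT_nonpos (Q : Fq[X]) : (polyT Fq Q).order ≤ 0 := by
  by_contra! h
  have hne : polyT Fq Q ≠ 0 := fun h0 => by simp [h0] at h
  rw [Ne, ← coeff_order_eq_zero, coeff_polyT, if_neg h.not_ge] at hne
  exact hne rfl

theorem neg_natDegree_le_order_polyT (Q : Fq[X]) : -(Q.natDegree : ℤ) ≤ (polyT Fq Q).order := by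
  rcases eq_or_ne (polyT Fq Q) 0 with h | h
  · simp [h]
  refine (le_order_iff_forall h).2 fun j hj => ?_
  rw [coeff_polyT]
  split_ifs
  · exact coeff_eq_zero_of_natDegree_lt (by omega)
  · rfl

theorem exists_coeff_polyT_eq (h : LaurentSeries Fq) :
    ∃ P : Fq[X], ∀ j ≤ 0, (polyT Fq P).coeff j = h.coeff j := by
  refine ⟨PowerSeries.trunc ((-h.order).toNat + 1) (PowerSeries.mk fun k => h.coeff (-k)),
    fun j hj => ?_⟩
  rw [coeff_polyT, if_pos hj, PowerSeries.coeff_trunc, PowerSeries.coeff_mk]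
  split_ifs with hlt
  · congr; omega
  · exact (coeff_eq_zero_of_lt_order (by omega)).symm

theorem coeff_mul_polyT_smul (f : LaurentSeries Fq) (c : Fq) (Q : Fq[X]) (j : ℤ) :
    (f * polyT Fq (c • Q)).coeff j = c * (f * polyT Fq Q).coeff j := by
  rw [smul_eq_C_mul, polyT, map_mul, aeval_C, LaurentSeries.algebraMap_apply, mul_left_comm,
    C_mul_eq_smul, HahnSeries.coeff_smul, smul_eq_mul, polyT]

theorem exists_ne_zero_coeff_mul_polyT_eq_zero (f : LaurentSeries Fq) (n : ℕ) :
    ∃ Q : Fq[X], Q ≠ 0 ∧ Q.natDegree ≤ n ∧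
      ∀ j : ℤ, 0 < j → j ≤ n → (f * polyT Fq Q).coeff j = 0 := by
  let L : degreeLT Fq (n + 1) →ₗ[Fq] (Fin n → Fq) :=
    { toFun := fun Q i => (f * polyT Fq Q).coeff ((i : ℤ) + 1)
      map_add' := fun Q R => by ext i; simp [polyT, mul_add]
      map_smul' := fun c Q => funext fun i => coeff_mul_polyT_smul Fq f c Q _ }
  have : FiniteDimensional Fq (degreeLT Fq (n + 1)) :=
    (degreeLTEquiv Fq (n + 1)).symm.finiteDimensional
  have hrank : Module.finrank Fq (Fin n → Fq) < Module.finrank Fq (degreeLT Fq (n + 1)) := by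
    simp [(degreeLTEquiv Fq (n + 1)).finrank_eq]
  obtain ⟨⟨Q, hQdeg⟩, hQker, hQ0⟩ := Submodule.exists_mem_ne_zero_of_ne_bot
    (LinearMap.ker_ne_bot_of_finrank_lt (f := L) hrank)
  have hQ : Q ≠ 0 := fun h => hQ0 (by simp [h])
  refine ⟨Q, hQ, ?_, fun j hj0 hjn => ?_⟩
  · have := (natDegree_lt_iff_degree_lt hQ).2 (mem_degreeLT.1 hQdeg)
    omega
  · have := congrFun (LinearMap.mem_ker.1 hQker) ⟨(j - 1).toNat, by omega⟩
    change (f * polyT Fq Q).coeff (((j - 1).toNat : ℤ) + 1) = 0 at this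
    rwa [show ((j - 1).toNat : ℤ) + 1 = j by omega] at this

theorem exists_polyT_approx (f : LaurentSeries Fq) (n : ℕ) :
    ∃ P Q : Fq[X], Q ≠ 0 ∧ Q.natDegree ≤ n ∧
      ∀ j : ℤ, j ≤ n → (f * polyT Fq Q - polyT Fq P).coeff j = 0 := by
  obtain ⟨Q, hQ, hdeg, hvanish⟩ := exists_ne_zero_coeff_mul_polyT_eq_zero Fq f n
  obtain ⟨P, hP⟩ := exists_coeff_polyT_eq Fq (f * polyT Fq Q)
  refine ⟨P, Q, hQ, hdeg, fun j hj => ?_⟩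
  rw [HahnSeries.coeff_sub, sub_eq_zero]
  rcases le_or_gt j 0 with hj0 | hj0
  · exact (hP j hj0).symm
  · rw [hvanish j hj0 hj, coeff_polyT, if_neg hj0.not_ge]

end

theorem one_lt_card : (1 : ℝ) < Fintype.card Fq := by
  exact_mod_cast Fintype.one_lt_card

theorem fabs_pos {x : LaurentSeries Fq} (hx : x ≠ 0) : 0 < fabs Fq x := by
  rw [fabs, if_neg hx]
  exact zpow_pos (zero_lt_one.trans (one_lt_card Fq)) _

theorem fabs_sub_div_polyT_lt {f : LaurentSeries Fq} {P Q : Fq[X]} {n : ℕ} (hQ : Q ≠ 0)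
    (hdeg : Q.natDegree ≤ n)
    (happrox : ∀ j : ℤ, j ≤ n → (f * polyT Fq Q - polyT Fq P).coeff j = 0)
    (hf : f ≠ polyT Fq P / polyT Fq Q) :
    fabs Fq (f - polyT Fq P / polyT Fq Q) < (Fintype.card Fq : ℝ) ^ (-(n : ℤ)) ∧
      fabs Fq (f - polyT Fq P / polyT Fq Q) < 1 / fabs Fq (polyT Fq Q) ^ 2 := by
  have hordQ := neg_natDegree_le_order_polyT Fq Q
  have hordQ' := order_polyT_nonpos Fq Q
  have hQ' : polyT Fq Q ≠ 0 := polyT_ne_zero Fq hQ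
  set Q' := polyT Fq Q
  set E := f * Q' - polyT Fq P with hEdef
  have hE : E ≠ 0 := fun h => hf (by rw [eq_div_iff hQ']; exact sub_eq_zero.1 h)
  have hEQ : f - polyT Fq P / Q' = E / Q' := by rw [hEdef]; field_simp
  have hordE : (n : ℤ) + 1 ≤ E.order :=
    (le_order_iff_forall hE).2 fun j hj => happrox j (by omega)
  have hord : (E / Q').order = E.order - Q'.order := by
    have := order_mul (div_ne_zero hE hQ') hQ'
    rw [div_mul_cancel₀ E hQ'] at this
    omega
  rw [hEQ, fabs, if_neg (div_ne_zero hE hQ'), hord, fabs, if_neg hQ', ← zpow_natCast,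
    ← zpow_mul, one_div, ← zpow_neg]
  constructor <;> exact zpow_lt_zpow_right₀ (one_lt_card Fq) (by omega)

theorem Set.infinite_of_forall_exists_pos_lt {α : Type*} {s : Set α} {d : α → ℝ}
    (hpos : ∀ x ∈ s, 0 < d x) (hsmall : ∀ ε > 0, ∃ x ∈ s, d x < ε) : s.Infinite := by
  intro hfin
  obtain ⟨x, hx, -⟩ := hsmall 1 one_pos
  obtain ⟨b, hb, hmin⟩ := Set.exists_min_image s d hfin ⟨x, hx⟩
  obtain ⟨y, hy, hlt⟩ := hsmall (d b) (hpos b hb)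
  exact (hmin y hy).not_gt hlt

/-- Hurwitz's theorem for formal Laurent series. For every
`f ∈ K ∖ 𝔽_q(t)` there are infinitely many rational functions `P/Q` with
`|f - P/Q| < 1/|Q|²`. -/
theorem hurwitz_laurent (f : LaurentSeries Fq) (hfirr : f ∉ ratSet Fq) :
    {g : LaurentSeries Fq | ∃ P Q : Polynomial Fq, Q ≠ 0 ∧ g = polyT Fq P / polyT Fq Q ∧
      fabs Fq (f - g) < 1 / (fabs Fq (polyT Fq Q)) ^ 2}.Infinite := by
  refine Set.infinite_of_forall_exists_pos_lt (d := fun g => fabs Fq (f - g)) ?_ fun ε hε => ?_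
  · rintro g ⟨P, Q, hQ, rfl, -⟩
    exact fabs_pos Fq (sub_ne_zero.2 fun h => hfirr ⟨P, Q, hQ, h⟩)
  · obtain ⟨n, hn⟩ := exists_pow_lt_of_lt_one hε (inv_lt_one_of_one_lt₀ (one_lt_card Fq))
    obtain ⟨P, Q, hQ, hdeg, happrox⟩ := exists_polyT_approx Fq f n
    obtain ⟨hsmall, hhurwitz⟩ :=
      fabs_sub_div_polyT_lt Fq hQ hdeg happrox fun h => hfirr ⟨P, Q, hQ, h⟩
    refine ⟨_, ⟨P, Q, hQ, rfl, hhurwitz⟩, hsmall.trans ?_⟩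
    rwa [zpow_neg, zpow_natCast, ← inv_pow]

end
end

section
/- Let h ∈ 𝕃 with deg h = −1. For every nonzero f ∈ 𝕃 with deg f = −m (m ≥ 1) such that the Artin map Ψ(f) = {1/f} is defined (f ∉ 𝔽_q(t) suffices), the algebraic Farey map satisfies F_h^{m+1}(f) = Ψ(f); that is, the Artin map is the acceleration of F_h by time −deg(f) + 1. -/
/-!
Setting: `q` a prime power is formalized as `q = Fintype.card Fq` for a finite field `Fq`.
The field `K = 𝔽_q((t⁻¹))` of formal Laurent series in `t⁻¹` is realized as
`LaurentSeries Fq = 𝔽_q((X))` with `X = t⁻¹` (so `deg f = -(X-adic order of f)`).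
-/

open scoped Classical
open MeasureTheory Filter
open scoped ENNReal

noncomputable section

variable (Fq : Type) [Field Fq] [Fintype Fq]

/-!
Write `u = 1/f`. While `deg u > 0`, the map `F_h` sends `1/u` to `1/T(u)` with
`T(u) = u - [(1 - h)u] = {u} + [hu]`, and on `deg u = 0` it sends `1/u` to `T(u)` itself.
As `deg h = -1`, each step lowers `deg u` by one and keeps `{u}`; once `deg u = 0` we have
`[hu] = 0`, so the last step lands on `{u} = {1/f} = Ψ(f)`.
-/

section AlgebraicFarey

variable {Fq}
omit [Fintype Fq]

lemma polyPart_coeff (f : LaurentSeries Fq) (j : ℤ) :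
    (polyPart Fq f).coeff j = if j ≤ 0 then f.coeff j else 0 := rfl

lemma fracPart_coeff (f : LaurentSeries Fq) (j : ℤ) :
    (fracPart Fq f).coeff j = if j ≤ 0 then 0 else f.coeff j := by
  rw [fracPart, HahnSeries.coeff_sub, polyPart_coeff]
  split <;> simp

lemma fdeg_eq_coe_iff {f : LaurentSeries Fq} {n : ℤ} :
    fdeg Fq f = (n : WithBot ℤ) ↔ f ≠ 0 ∧ f.order = -n := by
  unfold fdeg
  split_ifs with hf
  · simp [hf]
  · simp [hf, neg_eq_iff_eq_neg]

lemma fdeg_inv {f : LaurentSeries Fq} {n : ℤ} (hf : fdeg Fq f = n) :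
    fdeg Fq f⁻¹ = ((-n : ℤ) : WithBot ℤ) := by
  obtain ⟨hf0, hfo⟩ := fdeg_eq_coe_iff.1 hf
  have hmul := HahnSeries.order_mul hf0 (inv_ne_zero hf0)
  rw [mul_inv_cancel₀ hf0, HahnSeries.order_one] at hmul
  exact fdeg_eq_coe_iff.2 ⟨inv_ne_zero hf0, by omega⟩

lemma fdeg_mul {f g : LaurentSeries Fq} {m n : ℤ} (hf : fdeg Fq f = m) (hg : fdeg Fq g = n) :
    fdeg Fq (f * g) = ((m + n : ℤ) : WithBot ℤ) := by
  obtain ⟨hf0, hfo⟩ := fdeg_eq_coe_iff.1 hf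
  obtain ⟨hg0, hgo⟩ := fdeg_eq_coe_iff.1 hg
  exact fdeg_eq_coe_iff.2 ⟨mul_ne_zero hf0 hg0, by rw [HahnSeries.order_mul hf0 hg0]; omega⟩

lemma fdeg_eq_of_coeff_eq {f g : LaurentSeries Fq} {n N : ℤ} (hg : fdeg Fq g = n) (hnN : -n ≤ N)
    (hfg : ∀ j ≤ N, f.coeff j = g.coeff j) : fdeg Fq f = n := by
  obtain ⟨hg0, hgo⟩ := fdeg_eq_coe_iff.1 hg
  have hlead : f.coeff (-n) ≠ 0 := by
    rw [hfg _ hnN, ← hgo]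
    exact HahnSeries.coeff_order_eq_zero.not.2 hg0
  have hf0 : f ≠ 0 := HahnSeries.ne_zero_of_coeff_ne_zero hlead
  refine fdeg_eq_coe_iff.2 ⟨hf0, le_antisymm (HahnSeries.order_le_of_coeff_ne_zero hlead) ?_⟩
  by_contra! hlt
  apply HahnSeries.coeff_order_eq_zero.not.2 hf0
  rw [hfg _ (by omega)]
  exact HahnSeries.coeff_eq_zero_of_lt_order (by omega)

/-- `F_h` in the coordinate `u = 1/f`. -/
def fareyAlgRecip (h u : LaurentSeries Fq) : LaurentSeries Fq :=
  u - polyPart Fq ((1 - h) * u)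

lemma fareyAlgRecip_eq (h u : LaurentSeries Fq) :
    fareyAlgRecip h u = fracPart Fq u + polyPart Fq (h * u) := by
  ext j
  rw [fareyAlgRecip, HahnSeries.coeff_sub, polyPart_coeff, sub_mul, one_mul,
    HahnSeries.coeff_add, fracPart_coeff, polyPart_coeff]
  split <;> simp

lemma fracPart_fareyAlgRecip (h u : LaurentSeries Fq) :
    fracPart Fq (fareyAlgRecip h u) = fracPart Fq u := by
  ext j
  rw [fracPart_coeff, fracPart_coeff, fareyAlgRecip_eq, HahnSeries.coeff_add, fracPart_coeff,
    polyPart_coeff]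
  split <;> simp_all

lemma coeff_fareyAlgRecip_of_nonpos (h u : LaurentSeries Fq) {j : ℤ} (hj : j ≤ 0) :
    (fareyAlgRecip h u).coeff j = (h * u).coeff j := by
  rw [fareyAlgRecip_eq, HahnSeries.coeff_add, fracPart_coeff, polyPart_coeff, if_pos hj,
    if_pos hj, zero_add]

lemma fdeg_fareyAlgRecip {h u : LaurentSeries Fq} {n : ℤ}
    (hh : fdeg Fq h = ((-1 : ℤ) : WithBot ℤ)) (hu : fdeg Fq u = n) (hn : 0 < n) :
    fdeg Fq (fareyAlgRecip h u) = ((n - 1 : ℤ) : WithBot ℤ) := by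
  have hhu : fdeg Fq (h * u) = ((n - 1 : ℤ) : WithBot ℤ) := by
    simpa [neg_add_eq_sub] using fdeg_mul hh hu
  exact fdeg_eq_of_coeff_eq hhu (by omega) fun j hj => coeff_fareyAlgRecip_of_nonpos h u hj

lemma fareyAlgRecip_of_fdeg_zero {h u : LaurentSeries Fq}
    (hh : fdeg Fq h = ((-1 : ℤ) : WithBot ℤ)) (hu : fdeg Fq u = ((0 : ℤ) : WithBot ℤ)) :
    fareyAlgRecip h u = fracPart Fq u := by
  have hhu : (h * u).order = 1 := (fdeg_eq_coe_iff.1 (fdeg_mul hh hu)).2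
  ext j
  by_cases hj : j ≤ 0
  · rw [coeff_fareyAlgRecip_of_nonpos h u hj, fracPart_coeff, if_pos hj]
    exact HahnSeries.coeff_eq_zero_of_lt_order (by omega)
  · rw [fareyAlgRecip_eq, HahnSeries.coeff_add, polyPart_coeff, if_neg hj, add_zero]

lemma fareyAlg_inv_of_fdeg_zero (h : LaurentSeries Fq) {u : LaurentSeries Fq}
    (hu : fdeg Fq u = ((0 : ℤ) : WithBot ℤ)) :
    fareyAlg Fq h u⁻¹ = fareyAlgRecip h u := by
  have hinv : fdeg Fq u⁻¹ = ((0 : ℤ) : WithBot ℤ) := by simpa using fdeg_inv hu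
  have hu0 : u ≠ 0 := (fdeg_eq_coe_iff.1 hu).1
  rw [fareyAlg, if_pos hinv, inv_inv, fareyAlgRecip]
  field_simp

lemma fareyAlg_inv_of_fdeg_ne_zero (h : LaurentSeries Fq) {u : LaurentSeries Fq} {n : ℤ}
    (hu : fdeg Fq u = n) (hn : n ≠ 0) :
    fareyAlg Fq h u⁻¹ = (fareyAlgRecip h u)⁻¹ := by
  have hinv : fdeg Fq u⁻¹ ≠ ((0 : ℤ) : WithBot ℤ) := by
    rw [fdeg_inv hu, Ne, WithBot.coe_inj]
    omega
  have hu0 : u ≠ 0 := (fdeg_eq_coe_iff.1 hu).1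
  have hden : 1 - polyPart Fq ((1 - h) * u) * u⁻¹ = fareyAlgRecip h u * u⁻¹ := by
    rw [fareyAlgRecip, sub_mul u, mul_inv_cancel₀ hu0]
  rw [fareyAlg, if_neg hinv, inv_inv, hden, div_mul_cancel_right₀ (inv_ne_zero hu0)]

lemma fareyAlg_iterate_inv {h : LaurentSeries Fq} (hh : fdeg Fq h = ((-1 : ℤ) : WithBot ℤ)) :
    ∀ (n : ℕ) {u : LaurentSeries Fq}, fdeg Fq u = ((n : ℤ) : WithBot ℤ) →
      (fareyAlg Fq h)^[n + 1] u⁻¹ = fracPart Fq u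
  | 0, u, hu => by
    rw [Function.iterate_one, fareyAlg_inv_of_fdeg_zero h hu, fareyAlgRecip_of_fdeg_zero hh hu]
  | n + 1, u, hu => by
    have hstep := fdeg_fareyAlgRecip hh hu (by omega)
    rw [Nat.cast_add_one, add_sub_cancel_right] at hstep
    rw [Function.iterate_succ_apply, fareyAlg_inv_of_fdeg_ne_zero h hu (by omega),
      fareyAlg_iterate_inv hh n hstep, fracPart_fareyAlgRecip]

end AlgebraicFarey

theorem artin_is_acceleration_of_algebraic_farey
    (h : LaurentSeries Fq) (hh : fdeg Fq h = ((-1 : ℤ) : WithBot ℤ))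
    (f : LaurentSeries Fq)
    (m : ℕ) (hdeg : fdeg Fq f = ((-(m : ℤ) : ℤ) : WithBot ℤ)) :
    (fareyAlg Fq h)^[m + 1] f = artin Fq f := by
  have hinv : fdeg Fq f⁻¹ = ((m : ℤ) : WithBot ℤ) := by simpa using fdeg_inv hdeg
  rw [artin, ← fareyAlg_iterate_inv hh m hinv, inv_inv]

end
end

section
/- Let f ∈ 𝕃 ∖ 𝔽_q(t), let k ≥ 0, write A_{k+1} = a_m tᵐ + a_{m−1}t^{m−1} + ⋯ + a_0 with a_m ≠ 0 and m = deg A_{k+1}. If ℓ = 2·(deg A_1 + ⋯ + deg A_k) + deg A_{k+1} + i with 0 ≤ i ≤ deg A_{k+1}, then the matrix product M(f,0)·M(F(f,0))·⋯·M(F^{ℓ−1}(f,0)) equals the 2×2 matrix with rows (t^{m−i}·P_k, (a_m tᵐ + ⋯ + a_{m−i}t^{m−i})·P_k + P_{k−1}) and (t^{m−i}·Q_k, (a_m tᵐ + ⋯ + a_{m−i}t^{m−i})·Q_k + Q_{k−1}). -/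
/-!
Setting: `q` a prime power is formalized as `q = Fintype.card Fq` for a finite field `Fq`.
The field `K = 𝔽_q((t⁻¹))` of formal Laurent series in `t⁻¹` is realized as
`LaurentSeries Fq = 𝔽_q((X))` with `X = t⁻¹` (so `deg f = -(X-adic order of f)`).
-/

open scoped Classical
open MeasureTheory Filter
open scoped ENNReal

noncomputable section

variable (Fq : Type) [Field Fq] [Fintype Fq]

/-!
Write `g = Ψ^k f`, so that `deg g = -m` and `A_{k+1} = [1/g]`. Starting at `(g, 0)`, the Farey map
multiplies by `t` for `m - 1` steps (matrices `diag(1, t)`), inverts at step `m`, and during the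
next `m` steps multiplies `1/(t^m g)` back by `t`, each step releasing the next coefficient of
`A_{k+1}` from the top; after `2m` steps it reaches `(Ψ g, 0)`. Hence the first `m + i` steps of
this block multiply to `[[0, 1], [t^(m-i), top i+1 terms of A_{k+1}]]`, which for `i = m` is the
continuant matrix `[[0, 1], [1, A_{k+1}]]`.
By induction on `k` the first `2(deg A_1 + ⋯ + deg A_k)` steps multiply to
`[[P_{k-1}, P_k], [Q_{k-1}, Q_k]]` and end at `(Ψ^k f, 0)`; one partial block more gives the claim.
-/

section

variable {F : Type} [Field F]

theorem tvar_zpow (n : ℤ) : tvar F ^ n = HahnSeries.single (-n) 1 := by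
  rw [tvar, inv_zpow', ← RatFunc.single_zpow]

theorem tvar_pow (n : ℕ) : tvar F ^ n = HahnSeries.single (-(n : ℤ)) 1 := by
  rw [← zpow_natCast, tvar_zpow]

theorem tvar_ne_zero : tvar F ≠ 0 :=
  inv_ne_zero (HahnSeries.single_ne_zero one_ne_zero)

theorem tvar_zpow_mul_single (n : ℤ) (a : F) :
    tvar F ^ n * HahnSeries.single 0 a = HahnSeries.single (-n) a := by
  rw [tvar_zpow, HahnSeries.single_mul_single, add_zero, one_mul]

theorem coeff_tvar_zpow_mul (n j : ℤ) (x : LaurentSeries F) :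
    (tvar F ^ n * x).coeff j = x.coeff (j + n) := by
  rw [tvar_zpow, HahnSeries.coeff_single_mul, one_mul, sub_neg_eq_add]

theorem coeff_tvar_mul (j : ℤ) (x : LaurentSeries F) :
    (tvar F * x).coeff j = x.coeff (j + 1) := by
  simpa using coeff_tvar_zpow_mul 1 j x

theorem order_tvar_zpow_mul {x : LaurentSeries F} (hx : x ≠ 0) (n : ℤ) :
    (tvar F ^ n * x).order = x.order - n := by
  rw [tvar_zpow, HahnSeries.order_single_mul_of_isRegular isRegular_one hx]
  ring

theorem order_tvar_pow_mul {x : LaurentSeries F} (hx : x ≠ 0) (n : ℕ) :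
    (tvar F ^ n * x).order = x.order - n := by
  rw [← zpow_natCast, order_tvar_zpow_mul hx]

theorem LaurentSeries.order_inv {x : LaurentSeries F} (hx : x ≠ 0) : x⁻¹.order = -x.order := by
  have h := HahnSeries.order_mul hx (inv_ne_zero hx)
  rw [mul_inv_cancel₀ hx, HahnSeries.order_one] at h
  omega

theorem ne_zero_of_one_le_order {x : LaurentSeries F} (h : 1 ≤ x.order) : x ≠ 0 := by
  rintro rfl
  simp at h

theorem fdeg_of_ne_zero {x : LaurentSeries F} (hx : x ≠ 0) :
    fdeg F x = ((-x.order : ℤ) : WithBot ℤ) :=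
  if_neg hx

theorem fdeg_tvar_pow_mul {x : LaurentSeries F} (hx : x ≠ 0) (j : ℕ) :
    fdeg F (tvar F ^ j * x) = ((j - x.order : ℤ) : WithBot ℤ) := by
  rw [fdeg_of_ne_zero (mul_ne_zero (pow_ne_zero _ tvar_ne_zero) hx), order_tvar_pow_mul hx, neg_sub]

theorem one_le_order_of_mem_setL [Fintype F] {x : LaurentSeries F} (hx : x ∈ setL F)
    (hx0 : x ≠ 0) : 1 ≤ x.order := by
  replace hx : fabs F x < 1 := hx
  rw [fabs, if_neg hx0] at hx
  by_contra! h
  have hq : (1 : ℝ) < Fintype.card F := by exact_mod_cast Fintype.one_lt_card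
  exact hx.not_ge (one_le_zpow₀ hq.le (by omega))

theorem coeff_cutoff (N j : ℤ) (x : LaurentSeries F) :
    (cutoff F N x).coeff j = if j ≤ N then x.coeff j else 0 := rfl

theorem coeff_polyPart (j : ℤ) (x : LaurentSeries F) :
    (polyPart F x).coeff j = if j ≤ 0 then x.coeff j else 0 := rfl

theorem coeff_fracPart (j : ℤ) (x : LaurentSeries F) :
    (fracPart F x).coeff j = if j ≤ 0 then 0 else x.coeff j := by
  rw [fracPart, HahnSeries.coeff_sub, coeff_polyPart]
  split_ifs <;> simp

theorem cutoff_of_order_eq {x : LaurentSeries F} {N : ℤ} (h : x.order = N) :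
    cutoff F N x = HahnSeries.single N (x.coeff N) := by
  ext j
  rw [coeff_cutoff, HahnSeries.coeff_single]
  split_ifs with hle heq heq
  · rw [heq]
  · exact HahnSeries.coeff_eq_zero_of_lt_order (by omega)
  · omega
  · rfl

theorem cutoff_add_one (N : ℤ) (x : LaurentSeries F) :
    cutoff F (N + 1) x = cutoff F N x + HahnSeries.single (N + 1) (x.coeff (N + 1)) := by
  ext j
  rw [HahnSeries.coeff_add, coeff_cutoff, coeff_cutoff, HahnSeries.coeff_single]
  split_ifs <;> first | omega | simp_all

theorem cutoff_polyPart {N : ℤ} (hN : N ≤ 0) (x : LaurentSeries F) :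
    cutoff F N (polyPart F x) = cutoff F N x := by
  ext j
  rw [coeff_cutoff, coeff_cutoff, coeff_polyPart]
  split_ifs <;> first | omega | rfl

theorem order_cutoff {x : LaurentSeries F} {N : ℤ} (hx : x ≠ 0) (h : x.order ≤ N) :
    cutoff F N x ≠ 0 ∧ (cutoff F N x).order = x.order := by
  have hlead : (cutoff F N x).coeff x.order ≠ 0 := by
    rw [coeff_cutoff, if_pos h]
    exact HahnSeries.coeff_order_eq_zero.not.mpr hx
  have hne : cutoff F N x ≠ 0 := fun h0 => hlead (by rw [h0, HahnSeries.coeff_zero])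
  refine ⟨hne, le_antisymm (HahnSeries.order_le_of_coeff_ne_zero hlead) ?_⟩
  rw [HahnSeries.le_order_iff_forall hne]
  intro j hj
  rw [coeff_cutoff, HahnSeries.coeff_eq_zero_of_lt_order hj, ite_self]

theorem fdeg_polyPart_inv {g : LaurentSeries F} (hg : 1 ≤ g.order) :
    fdeg F (polyPart F g⁻¹) = g.order := by
  have hg0 := ne_zero_of_one_le_order hg
  obtain ⟨hne, hord⟩ := order_cutoff (N := 0) (inv_ne_zero hg0)
    (by rw [LaurentSeries.order_inv hg0]; omega)
  rw [polyPart, fdeg_of_ne_zero hne, hord, LaurentSeries.order_inv hg0, neg_neg]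

theorem fracPart_of_one_le_order {x : LaurentSeries F} (h : 1 ≤ x.order) : fracPart F x = x := by
  ext j
  rw [coeff_fracPart]
  split_ifs with hj
  · exact (HahnSeries.coeff_eq_zero_of_lt_order (by omega)).symm
  · rfl

theorem one_le_order_fracPart {x : LaurentSeries F} (hx : fracPart F x ≠ 0) :
    1 ≤ (fracPart F x).order := by
  by_contra! h
  apply HahnSeries.coeff_order_eq_zero.not.mpr hx
  rw [coeff_fracPart, if_pos (by omega)]

theorem polyPart_of_order_nonneg {x : LaurentSeries F} (h : 0 ≤ x.order) :
    polyPart F x = HahnSeries.single 0 (x.coeff 0) := by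
  ext j
  rw [coeff_polyPart, HahnSeries.coeff_single]
  split_ifs with hle heq heq
  · rw [heq]
  · exact HahnSeries.coeff_eq_zero_of_lt_order (by omega)
  · omega
  · rfl

theorem fracPart_tvar_mul_fracPart (x : LaurentSeries F) :
    fracPart F (tvar F * fracPart F x) = fracPart F (tvar F * x) := by
  ext j
  simp only [coeff_fracPart, coeff_tvar_mul]
  split_ifs <;> first | omega | rfl

theorem polyPart_tvar_mul_fracPart (x : LaurentSeries F) :
    polyPart F (tvar F * fracPart F x) = HahnSeries.single 0 (x.coeff 1) := by
  ext j
  rw [coeff_polyPart, coeff_tvar_mul, coeff_fracPart, HahnSeries.coeff_single]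
  split_ifs <;> first | omega | rfl | simp_all

theorem polyT_monomial_s10 (n : ℕ) (a : F) :
    polyT F (Polynomial.monomial n a) = HahnSeries.single (-(n : ℤ)) a := by
  rw [polyT, Polynomial.aeval_monomial, LaurentSeries.algebraMap_apply, HahnSeries.C_apply,
    tvar_pow, HahnSeries.single_mul_single, zero_add, mul_one]

theorem coeff_polyT_neg (P : Polynomial F) (n : ℕ) : (polyT F P).coeff (-n) = P.coeff n := by
  induction P using Polynomial.induction_on' with
  | add p q hp hq => rw [polyT, map_add, HahnSeries.coeff_add, ← polyT, ← polyT, hp, hq,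
      Polynomial.coeff_add]
  | monomial r a =>
      rw [polyT_monomial_s10, HahnSeries.coeff_single, Polynomial.coeff_monomial]
      simp only [neg_inj, Nat.cast_inj, eq_comm]

theorem coeff_polyT_of_pos (P : Polynomial F) {j : ℤ} (hj : 0 < j) : (polyT F P).coeff j = 0 := by
  induction P using Polynomial.induction_on' with
  | add p q hp hq =>
    rw [polyT, map_add, HahnSeries.coeff_add, ← polyT, ← polyT, hp, hq, add_zero]
  | monomial r a => rw [polyT_monomial_s10, HahnSeries.coeff_single, if_neg (by omega)]

theorem polyT_ne_zero_s10 {P : Polynomial F} (hP : P ≠ 0) : polyT F P ≠ 0 := by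
  intro h
  have := coeff_polyT_neg P P.natDegree
  rw [h, HahnSeries.coeff_zero] at this
  exact Polynomial.leadingCoeff_ne_zero.mpr hP this.symm

theorem exists_polyT_eq_polyPart (x : LaurentSeries F) :
    ∃ P : Polynomial F, polyT F P = polyPart F x := by
  obtain ⟨N, hN⟩ : ∃ N : ℕ, ∀ n : ℕ, N ≤ n → x.coeff (-n) = 0 :=
    ⟨(-x.order).toNat + 1, fun n hn => HahnSeries.coeff_eq_zero_of_lt_order (by omega)⟩
  refine ⟨∑ n ∈ Finset.range N, Polynomial.monomial n (x.coeff (-n)), ?_⟩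
  ext j
  rw [coeff_polyPart]
  split_ifs with hj
  · obtain ⟨n, rfl⟩ : ∃ n : ℕ, j = -n := ⟨(-j).toNat, by omega⟩
    rw [coeff_polyT_neg, Polynomial.finsetSum_coeff]
    simp only [Polynomial.coeff_monomial, Finset.sum_ite_eq', Finset.mem_range]
    split_ifs with hn
    · rfl
    · exact (hN n (not_lt.mp hn)).symm
  · exact coeff_polyT_of_pos _ (by omega)

theorem zero_mem_ratSet : (0 : LaurentSeries F) ∈ ratSet F :=
  ⟨0, 1, one_ne_zero, by rw [polyT, polyT, map_zero, map_one, zero_div]⟩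

theorem artin_not_mem_ratSet {g : LaurentSeries F} (hg : g ∉ ratSet F) :
    artin F g ∉ ratSet F := by
  rintro ⟨P, Q, hQ, hPQ⟩
  obtain ⟨A, hA⟩ := exists_polyT_eq_polyPart g⁻¹
  have hginv : g⁻¹ = polyT F (A * Q + P) / polyT F Q := by
    have hsplit : g⁻¹ = polyPart F g⁻¹ + artin F g := by rw [artin, fracPart]; ring
    rw [eq_div_iff (polyT_ne_zero_s10 hQ), hsplit, ← hA, hPQ, add_mul,
      div_mul_cancel₀ _ (polyT_ne_zero_s10 hQ)]
    simp only [polyT, map_add, map_mul]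
  refine hg ⟨Q, A * Q + P, fun h0 => hg ?_, by rw [← inv_inv g, hginv, inv_div]⟩
  rw [← inv_inv g, hginv, h0, polyT, map_zero, zero_div, inv_zero]
  exact zero_mem_ratSet

theorem one_le_order_artin {g : LaurentSeries F} (hg : g ∉ ratSet F) :
    1 ≤ (artin F g).order := by
  refine one_le_order_fracPart fun h0 => artin_not_mem_ratSet hg ?_
  rw [artin, h0]
  exact zero_mem_ratSet

theorem iterate_artin_not_mem_ratSet {f : LaurentSeries F} (hf : f ∉ ratSet F) (n : ℕ) :
    (artin F)^[n] f ∉ ratSet F := by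
  induction n with
  | zero => exact hf
  | succ n ih => rw [Function.iterate_succ_apply']; exact artin_not_mem_ratSet ih

theorem one_le_order_iterate_artin {f : LaurentSeries F} (hf : f ∉ ratSet F)
    (hford : 1 ≤ f.order) : ∀ n : ℕ, 1 ≤ ((artin F)^[n] f).order
  | 0 => hford
  | n + 1 => by
    rw [Function.iterate_succ_apply']
    exact one_le_order_artin (iterate_artin_not_mem_ratSet hf n)

theorem order_iterate_artin_of_fdeg_pquot {f : LaurentSeries F} (hf : f ∉ ratSet F)
    (hford : 1 ≤ f.order) {n e : ℕ} (h : fdeg F (pquot F f n) = ((e : ℤ) : WithBot ℤ)) :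
    ((artin F)^[n - 1] f).order = e ∧ 0 < e := by
  have hpos := one_le_order_iterate_artin hf hford (n - 1)
  rw [pquot, fdeg_polyPart_inv hpos] at h
  have he : ((artin F)^[n - 1] f).order = e := WithBot.coe_inj.mp h
  exact ⟨he, by omega⟩

theorem convergent_matrix_mul_pquot (f : LaurentSeries F) (k : ℕ) :
    !![Pc F f k, Pc F f (k + 1); Qc F f k, Qc F f (k + 1)] * !![0, 1; 1, pquot F f (k + 1)]
      = !![Pc F f (k + 1), Pc F f (k + 2); Qc F f (k + 1), Qc F f (k + 2)] := by
  rw [Matrix.mul_fin_two]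
  simp only [Pc, Qc, convPQ]
  ext a b : 1
  fin_cases a <;> fin_cases b <;> simp <;> ring

def fareyMatProd (p : LaurentSeries F × ℤ) (n : ℕ) :
    Matrix (Fin 2) (Fin 2) (LaurentSeries F) :=
  ((List.range n).map fun j => geomMat F ((fareyGeom F)^[j] p)).prod

theorem fareyMatProd_zero (p : LaurentSeries F × ℤ) : fareyMatProd p 0 = 1 := rfl

theorem fareyMatProd_succ (p : LaurentSeries F × ℤ) (n : ℕ) :
    fareyMatProd p (n + 1) = fareyMatProd p n * geomMat F ((fareyGeom F)^[n] p) :=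
  List.prod_range_succ _ n

theorem fareyMatProd_add (p : LaurentSeries F × ℤ) (a b : ℕ) :
    fareyMatProd p (a + b) = fareyMatProd p a * fareyMatProd ((fareyGeom F)^[a] p) b := by
  simp only [fareyMatProd, List.range_add, List.map_append, List.prod_append, List.map_map,
    Function.comp_def]
  congr 3 with j
  rw [add_comm, Function.iterate_add_apply]

theorem geomMat_fracPart_of_neg (x : LaurentSeries F) {n : ℤ} (hn : n < 0) :
    geomMat F (fracPart F x, n)
      = !![(tvar F)⁻¹, (tvar F)⁻¹ * HahnSeries.single 0 (x.coeff 1); 0, 1] := by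
  rw [geomMat, if_pos hn, polyPart_tvar_mul_fracPart]

section FareyBlock

variable {g : LaurentSeries F} {e : ℕ}

theorem fareyGeom_iterate_of_lt_order (hord : g.order = e) {j : ℕ} (hj : j < e) :
    (fareyGeom F)^[j] (g, 0) = (tvar F ^ j * g, (j : ℤ)) := by
  induction j with
  | zero => simp
  | succ j ih =>
    have hg : g ≠ 0 := ne_zero_of_one_le_order (by omega)
    have hdeg : fdeg F (tvar F ^ j * g) < ((-1 : ℤ) : WithBot ℤ) := by
      rw [fdeg_tvar_pow_mul hg, hord]
      exact WithBot.coe_lt_coe.mpr (by omega)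
    rw [Function.iterate_succ_apply', ih (by omega), fareyGeom, if_pos (Or.inl hdeg), ← mul_assoc,
      ← pow_succ', fracPart_of_one_le_order (by rw [order_tvar_pow_mul hg, hord]; omega)]
    push_cast
    rfl

theorem fareyGeom_iterate_order_add (hord : g.order = e) (he : 0 < e) {j : ℕ} (hj : j ≤ e) :
    (fareyGeom F)^[e + j] (g, 0)
      = (fracPart F (tvar F ^ ((j : ℤ) - e) * g⁻¹), (j : ℤ) - e) := by
  have hg : g ≠ 0 := ne_zero_of_one_le_order (by omega)
  induction j with
  | zero =>
    obtain ⟨e, rfl⟩ : ∃ e', e = e' + 1 := ⟨e - 1, by omega⟩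
    have hdeg : fdeg F (tvar F ^ e * g) = ((-1 : ℤ) : WithBot ℤ) := by
      rw [fdeg_tvar_pow_mul hg, hord]
      push_cast
      ring_nf
    rw [add_zero, Function.iterate_succ_apply', fareyGeom_iterate_of_lt_order hord (by omega),
      fareyGeom, if_neg (by simp [hdeg]), ← mul_assoc, ← pow_succ', mul_inv, ← zpow_natCast,
      ← zpow_neg]
    push_cast
    simp
  | succ j ih =>
    rw [← add_assoc, Function.iterate_succ_apply', ih (by omega), fareyGeom,
      if_pos (Or.inr (by omega)), fracPart_tvar_mul_fracPart, ← mul_assoc,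
      ← zpow_one_add₀ tvar_ne_zero]
    push_cast
    ring_nf

theorem fareyGeom_iterate_two_mul_order (hord : g.order = e) (he : 0 < e) :
    (fareyGeom F)^[2 * e] (g, 0) = (artin F g, 0) := by
  rw [two_mul, fareyGeom_iterate_order_add hord he le_rfl, sub_self, zpow_zero, one_mul]
  rfl

theorem fareyMatProd_of_lt_order (hord : g.order = e) {j : ℕ} (hj : j < e) :
    fareyMatProd (g, 0) j = !![1, 0; 0, tvar F ^ j] := by
  induction j with
  | zero => rw [fareyMatProd_zero, Matrix.one_fin_two, pow_zero]
  | succ j ih =>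
    have hg : g ≠ 0 := ne_zero_of_one_le_order (by omega)
    have hdeg : fdeg F (tvar F ^ j * g) ≠ ((-1 : ℤ) : WithBot ℤ) := by
      rw [fdeg_tvar_pow_mul hg, hord]
      exact WithBot.coe_inj.not.mpr (by omega)
    rw [fareyMatProd_succ, ih (by omega), fareyGeom_iterate_of_lt_order hord (by omega), geomMat,
      if_neg (by simp), if_neg hdeg, Matrix.mul_fin_two]
    simp [pow_succ]

theorem fareyMatProd_order (hord : g.order = e) (he : 0 < e) :
    fareyMatProd (g, 0) e = !![0, 1; tvar F ^ e, cutoff F (-e) g⁻¹] := by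
  have hg : g ≠ 0 := ne_zero_of_one_le_order (by omega)
  obtain ⟨e, rfl⟩ : ∃ e', e = e' + 1 := ⟨e - 1, by omega⟩
  have hdeg : fdeg F (tvar F ^ e * g) = ((-1 : ℤ) : WithBot ℤ) := by
    rw [fdeg_tvar_pow_mul hg, hord]
    push_cast
    ring_nf
  have hinv : (tvar F * (tvar F ^ e * g))⁻¹ = tvar F ^ (-((e + 1 : ℕ) : ℤ)) * g⁻¹ := by
    rw [← mul_assoc, ← pow_succ', mul_inv, zpow_neg, zpow_natCast]
  have hpoly : polyPart F (tvar F * (tvar F ^ e * g))⁻¹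
      = HahnSeries.single 0 (g⁻¹.coeff (-((e + 1 : ℕ) : ℤ))) := by
    have h0 : 0 ≤ (tvar F ^ (-((e + 1 : ℕ) : ℤ)) * g⁻¹).order := by
      rw [order_tvar_zpow_mul (inv_ne_zero hg), LaurentSeries.order_inv hg, hord, neg_sub_neg,
        sub_self]
    rw [hinv, polyPart_of_order_nonneg h0, coeff_tvar_zpow_mul, zero_add]
  have hcut : cutoff F (-((e + 1 : ℕ) : ℤ)) g⁻¹
      = HahnSeries.single (-((e + 1 : ℕ) : ℤ)) (g⁻¹.coeff (-((e + 1 : ℕ) : ℤ))) :=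
    cutoff_of_order_eq (by rw [LaurentSeries.order_inv hg, hord])
  rw [fareyMatProd_succ, fareyMatProd_of_lt_order hord (by omega),
    fareyGeom_iterate_of_lt_order hord (by omega), geomMat, if_neg (by simp), if_pos hdeg, hpoly,
    hcut, Matrix.mul_fin_two, ← mul_assoc (tvar F ^ e), ← pow_succ, ← zpow_natCast,
    tvar_zpow_mul_single]
  simp

theorem fareyMatProd_order_add (hord : g.order = e) (he : 0 < e) {i : ℕ} (hi : i ≤ e) :
    fareyMatProd (g, 0) (e + i)
      = !![0, 1; tvar F ^ ((e : ℤ) - i), cutoff F ((i : ℤ) - e) g⁻¹] := by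
  induction i with
  | zero => rw [add_zero, fareyMatProd_order hord he]; simp
  | succ i ih =>
    rw [← add_assoc, fareyMatProd_succ, ih (by omega),
      fareyGeom_iterate_order_add hord he (by omega), geomMat_fracPart_of_neg _ (by omega),
      coeff_tvar_zpow_mul, Matrix.mul_fin_two]
    have hpow :
        tvar F ^ ((e : ℤ) - i) * (tvar F)⁻¹ = tvar F ^ ((e : ℤ) - (i + 1 : ℕ)) := by
      rw [← zpow_sub_one₀ tvar_ne_zero]; push_cast; ring_nf
    have hterm : tvar F ^ ((e : ℤ) - i) *
        ((tvar F)⁻¹ * HahnSeries.single 0 (g⁻¹.coeff (1 + (i - e)))) =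
          HahnSeries.single ((i : ℤ) - e + 1) (g⁻¹.coeff ((i : ℤ) - e + 1)) := by
      rw [← mul_assoc, hpow, tvar_zpow_mul_single]; push_cast; ring_nf
    have hcut : cutoff F ((i + 1 : ℕ) - e) g⁻¹ = cutoff F ((i : ℤ) - e) g⁻¹
        + HahnSeries.single ((i : ℤ) - e + 1) (g⁻¹.coeff ((i : ℤ) - e + 1)) := by
      rw [← cutoff_add_one]; push_cast; ring_nf
    rw [hpow, hterm, hcut]
    simp [add_comm]

end FareyBlock

variable {f : LaurentSeries F} {d : ℕ → ℕ}

theorem fareyGeom_iterate_two_mul_sum (k : ℕ)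
    (hd : ∀ n ∈ Finset.Icc 1 k, ((artin F)^[n - 1] f).order = d n ∧ 0 < d n) :
    (fareyGeom F)^[2 * ∑ n ∈ Finset.Icc 1 k, d n] (f, 0) = ((artin F)^[k] f, 0) := by
  induction k with
  | zero => simp
  | succ k ih =>
    obtain ⟨hord, hpos⟩ : ((artin F)^[k] f).order = d (k + 1) ∧ 0 < d (k + 1) :=
      hd (k + 1) (by simp)
    rw [Finset.sum_Icc_succ_top (by omega), mul_add, add_comm, Function.iterate_add_apply,
      ih fun n hn => hd n (Finset.Icc_subset_Icc_right (by omega) hn),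
      fareyGeom_iterate_two_mul_order hord hpos, Function.iterate_succ_apply']

theorem fareyMatProd_two_mul_sum (k : ℕ)
    (hd : ∀ n ∈ Finset.Icc 1 k, ((artin F)^[n - 1] f).order = d n ∧ 0 < d n) :
    fareyMatProd (f, 0) (2 * ∑ n ∈ Finset.Icc 1 k, d n)
      = !![Pc F f k, Pc F f (k + 1); Qc F f k, Qc F f (k + 1)] := by
  induction k with
  | zero => simp [fareyMatProd_zero, Matrix.one_fin_two, Pc, Qc, convPQ]
  | succ k ih =>
    have hd' : ∀ n ∈ Finset.Icc 1 k, ((artin F)^[n - 1] f).order = d n ∧ 0 < d n :=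
      fun n hn => hd n (Finset.Icc_subset_Icc_right (by omega) hn)
    obtain ⟨hord, hpos⟩ : ((artin F)^[k] f).order = d (k + 1) ∧ 0 < d (k + 1) :=
      hd (k + 1) (by simp)
    rw [Finset.sum_Icc_succ_top (by omega), mul_add, two_mul (d _), fareyMatProd_add,
      fareyGeom_iterate_two_mul_sum k hd', ih hd', fareyMatProd_order_add hord hpos le_rfl,
      sub_self, zpow_zero]
    exact convergent_matrix_mul_pquot f k

end

/-- If `ℓ = 2(deg A_1 + ⋯ + deg A_k) + deg A_{k+1} + i` with
`0 ≤ i ≤ m = deg A_{k+1}`, then `M(f,0)·M(F(f,0))⋯M(F^{ℓ-1}(f,0))` equals the matrix with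
rows `(t^{m-i}·P_k, S·P_k + P_{k-1})` and `(t^{m-i}·Q_k, S·Q_k + Q_{k-1})`, where
`S = a_m tᵐ + ⋯ + a_{m-i} t^{m-i}` is the truncation of `A_{k+1}` to its top `i+1` terms. -/
theorem geom_matrix_product_second_case
    (f : LaurentSeries Fq) (hfL : f ∈ setL Fq) (hfirr : f ∉ ratSet Fq)
    (k : ℕ) (d : ℕ → ℕ)
    (hd : ∀ n, 1 ≤ n → n ≤ k + 1 → fdeg Fq (pquot Fq f n) = ((d n : ℤ) : WithBot ℤ))
    (m : ℕ) (hm : m = d (k + 1)) (i : ℕ) (hi : i ≤ m)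
    (ℓ : ℕ) (hℓ : ℓ = 2 * ∑ n ∈ Finset.Icc 1 k, d n + m + i) :
    ((List.range ℓ).map (fun j => geomMat Fq ((fareyGeom Fq)^[j] (f, 0)))).prod
      = !![(tvar Fq) ^ (m - i) * Pc Fq f (k + 1),
             cutoff Fq ((i : ℤ) - (m : ℤ)) (pquot Fq f (k + 1)) * Pc Fq f (k + 1) + Pc Fq f k;
           (tvar Fq) ^ (m - i) * Qc Fq f (k + 1),
             cutoff Fq ((i : ℤ) - (m : ℤ)) (pquot Fq f (k + 1)) * Qc Fq f (k + 1) + Qc Fq f k] := by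
  have hford : 1 ≤ f.order :=
    one_le_order_of_mem_setL hfL fun h0 => hfirr (h0 ▸ zero_mem_ratSet)
  have hord : ∀ n ∈ Finset.Icc 1 (k + 1), ((artin Fq)^[n - 1] f).order = d n ∧ 0 < d n :=
    fun n hn => order_iterate_artin_of_fdeg_pquot hfirr hford
      (hd n (Finset.mem_Icc.mp hn).1 (Finset.mem_Icc.mp hn).2)
  have hord' : ∀ n ∈ Finset.Icc 1 k, ((artin Fq)^[n - 1] f).order = d n ∧ 0 < d n :=
    fun n hn => hord n (Finset.Icc_subset_Icc_right (by omega) hn)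
  obtain ⟨hlast, hpos⟩ : ((artin Fq)^[k] f).order = d (k + 1) ∧ 0 < d (k + 1) :=
    hord (k + 1) (by simp)
  subst hm hℓ
  change fareyMatProd (f, 0) _ = _
  rw [add_assoc, fareyMatProd_add, fareyMatProd_two_mul_sum k hord',
    fareyGeom_iterate_two_mul_sum k hord', fareyMatProd_order_add hlast hpos hi,
    pquot, cutoff_polyPart (by omega), ← Nat.cast_sub hi, zpow_natCast, Matrix.mul_fin_two]
  ext a b : 1
  fin_cases a <;> fin_cases b <;> simp <;> ring
end
end

section
/- Let f ∈ 𝕃 ∖ 𝔽_q(t), let k ≥ 0, and write A_{k+1} = a_m tᵐ + a_{m−1}t^{m−1} + ⋯ + a_0 with a_m ≠ 0 and m = deg A_{k+1}. Then for every i with 0 ≤ i ≤ deg A_{k+1}, |f − ((a_m tᵐ + ⋯ + a_{m−i}t^{m−i})·P_k + P_{k−1}) / ((a_m tᵐ + ⋯ + a_{m−i}t^{m−i})·Q_k + Q_{k−1})| ≤ q^{−i} / (|Q_k|·|Q_{k+1}|). -/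
/-!
Setting: `q` a prime power is formalized as `q = Fintype.card Fq` for a finite field `Fq`.
The field `K = 𝔽_q((t⁻¹))` of formal Laurent series in `t⁻¹` is realized as
`LaurentSeries Fq = 𝔽_q((X))` with `X = t⁻¹` (so `deg f = -(X-adic order of f)`).
-/

open scoped Classical
open MeasureTheory Filter
open scoped ENNReal

noncomputable section

variable (Fq : Type) [Field Fq] [Fintype Fq]

/-!
Let `x = (Ψ^k f)⁻¹ = A_{k+1} + Ψ^{k+1} f` be the complete quotient, so that
`f = (x P_k + P_{k-1}) / (x Q_k + Q_{k-1})`. With the determinant identity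
`P_k Q_{k-1} - P_{k-1} Q_k = ±1` this gives, for every `y`,
`f - (y P_k + P_{k-1}) / (y Q_k + Q_{k-1}) = ±(x - y) / ((x Q_k + Q_{k-1}) (y Q_k + Q_{k-1}))`.
For the truncation `y = S` of `A_{k+1}`, the difference `x - S` only has terms of degree
`< m - i`, while `|S| = |x| = q^m`. As `|Q_{k-1}| < |Q_k|`, the ultrametric inequality gives
both denominators the absolute value `q^m |Q_k| = |Q_{k+1}|`.
-/

section ContinuedFraction

variable {Fq : Type} [Field Fq] {f : LaurentSeries Fq}

lemma cutoff_cutoff_of_le {N M : ℤ} (h : N ≤ M) (x : LaurentSeries Fq) :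
    cutoff Fq N (cutoff Fq M x) = cutoff Fq N x := by
  ext j
  simp only [cutoff]
  split_ifs <;> first | rfl | omega

lemma inv_iterate_artin (f : LaurentSeries Fq) (k : ℕ) :
    ((artin Fq)^[k] f)⁻¹ = pquot Fq f (k + 1) + (artin Fq)^[k + 1] f := by
  rw [Function.iterate_succ_apply', artin, fracPart, pquot, Nat.add_sub_cancel, add_sub_cancel]

lemma iterate_artin_ne_zero_of_le {j k : ℕ} (hjk : j ≤ k) (hk : (artin Fq)^[k] f ≠ 0) :
    (artin Fq)^[j] f ≠ 0 := by
  have hfix : artin Fq 0 = 0 := by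
    ext n; simp [artin, fracPart, polyPart, cutoff]
  intro hj
  apply hk
  rw [← Nat.sub_add_cancel hjk, Function.iterate_add_apply, hj, Function.iterate_fixed hfix]

lemma iterate_artin_ne_zero_of_pquot_ne_zero {k : ℕ} (h : pquot Fq f (k + 1) ≠ 0) :
    (artin Fq)^[k] f ≠ 0 := by
  intro hk
  apply h
  ext n; simp [pquot, hk, polyPart, cutoff]

lemma Pc_add_two (k : ℕ) :
    Pc Fq f (k + 2) = pquot Fq f (k + 1) * Pc Fq f (k + 1) + Pc Fq f k := rfl

lemma Qc_add_two (k : ℕ) :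
    Qc Fq f (k + 2) = pquot Fq f (k + 1) * Qc Fq f (k + 1) + Qc Fq f k := rfl

lemma Pc_mul_Qc_sub_Pc_mul_Qc (k : ℕ) :
    Pc Fq f (k + 1) * Qc Fq f k - Pc Fq f k * Qc Fq f (k + 1) = (-1) ^ (k + 1) := by
  induction k with
  | zero => simp [Pc, Qc, convPQ]
  | succ k ih => rw [Pc_add_two, Qc_add_two, pow_succ]; linear_combination (-1) * ih

lemma mul_complete_quotient_denom {k : ℕ} (hk : (artin Fq)^[k] f ≠ 0) :
    f * (((artin Fq)^[k] f)⁻¹ * Qc Fq f (k + 1) + Qc Fq f k) =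
      ((artin Fq)^[k] f)⁻¹ * Pc Fq f (k + 1) + Pc Fq f k := by
  induction k with
  | zero => simp [Pc, Qc, convPQ, mul_inv_cancel₀ (show f ≠ 0 from hk)]
  | succ k ih =>
    have ih := ih (iterate_artin_ne_zero_of_le k.le_succ hk)
    rw [inv_iterate_artin] at ih
    rw [Pc_add_two, Qc_add_two]
    field_simp
    linear_combination ih

end ContinuedFraction

lemma sub_div_eq_of_mul_eq {K : Type*} [Field K] {f x s p₁ p₀ q₁ q₀ : K}
    (hf : f * (x * q₁ + q₀) = x * p₁ + p₀) (hx : x * q₁ + q₀ ≠ 0) (hs : s * q₁ + q₀ ≠ 0) :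
    f - (s * p₁ + p₀) / (s * q₁ + q₀) =
      (p₁ * q₀ - p₀ * q₁) * (x - s) / ((x * q₁ + q₀) * (s * q₁ + q₀)) := by
  rw [eq_div_iff (mul_ne_zero hx hs), sub_mul, ← mul_assoc, div_mul_eq_mul_div,
    mul_div_assoc, mul_div_cancel_right₀ _ hs, mul_comm _ (x * q₁ + q₀)]
  linear_combination (s * q₁ + q₀) * hf

local notation "q" => (Fintype.card Fq : ℝ)

section Absolute

variable {Fq}

lemma one_lt_card_real : 1 < q := by exact_mod_cast Fintype.one_lt_card

lemma fabs_of_ne_zero {g : LaurentSeries Fq} (hg : g ≠ 0) : fabs Fq g = q ^ (-g.order) :=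
  if_neg hg

lemma fabs_nonneg (g : LaurentSeries Fq) : 0 ≤ fabs Fq g := by
  unfold fabs; split <;> positivity

lemma fabs_eq_zero_iff {g : LaurentSeries Fq} : fabs Fq g = 0 ↔ g = 0 := by
  refine ⟨fun h => by_contra fun hg => ?_, fun h => if_pos h⟩
  rw [fabs_of_ne_zero hg] at h
  exact (zpow_pos (zero_lt_one.trans one_lt_card_real) _).ne' h

lemma fabs_mul (g h : LaurentSeries Fq) : fabs Fq (g * h) = fabs Fq g * fabs Fq h := by
  rcases eq_or_ne g 0 with rfl | hg
  · simp [fabs]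
  rcases eq_or_ne h 0 with rfl | hh
  · simp [fabs]
  rw [fabs_of_ne_zero hg, fabs_of_ne_zero hh, fabs_of_ne_zero (mul_ne_zero hg hh),
    HahnSeries.order_mul hg hh, neg_add, zpow_add₀ (zero_lt_one.trans one_lt_card_real).ne']

lemma fabs_add_le_max (g h : LaurentSeries Fq) :
    fabs Fq (g + h) ≤ max (fabs Fq g) (fabs Fq h) := by
  rcases eq_or_ne (g + h) 0 with hgh | hgh
  · rw [hgh, fabs_eq_zero_iff.2 rfl]
    exact le_max_of_le_left (fabs_nonneg g)
  rcases eq_or_ne g 0 with rfl | hg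
  · simp
  rcases eq_or_ne h 0 with rfl | hh
  · simp
  have hmin := HahnSeries.min_order_le_order_add hgh
  rw [fabs_of_ne_zero hgh, fabs_of_ne_zero hg, fabs_of_ne_zero hh]
  rcases le_total g.order h.order with hle | hle
  · rw [min_eq_left hle] at hmin
    exact le_max_of_le_left (zpow_le_zpow_right₀ one_lt_card_real.le (neg_le_neg hmin))
  · rw [min_eq_right hle] at hmin
    exact le_max_of_le_right (zpow_le_zpow_right₀ one_lt_card_real.le (neg_le_neg hmin))

variable (Fq) in
def fabsAbv : AbsoluteValue (LaurentSeries Fq) ℝ where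
  toFun := fabs Fq
  map_mul' := fabs_mul
  nonneg' := fabs_nonneg
  eq_zero' _ := fabs_eq_zero_iff
  add_le' g h := (fabs_add_le_max g h).trans
    (max_le_add_of_nonneg (fabs_nonneg g) (fabs_nonneg h))

lemma fabs_pos_iff {g : LaurentSeries Fq} : 0 < fabs Fq g ↔ g ≠ 0 := (fabsAbv Fq).pos_iff

lemma fabs_neg (g : LaurentSeries Fq) : fabs Fq (-g) = fabs Fq g := (fabsAbv Fq).map_neg g

lemma fabs_inv (g : LaurentSeries Fq) : fabs Fq g⁻¹ = (fabs Fq g)⁻¹ := map_inv₀ (fabsAbv Fq) g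

lemma fabs_div (g h : LaurentSeries Fq) : fabs Fq (g / h) = fabs Fq g / fabs Fq h :=
  map_div₀ (fabsAbv Fq) g h

lemma fabs_neg_one_pow (n : ℕ) : fabs Fq ((-1) ^ n) = 1 := by
  change fabsAbv Fq ((-1) ^ n) = 1
  rw [map_pow, AbsoluteValue.map_neg, AbsoluteValue.map_one, one_pow]

lemma fabs_add_eq_left_of_lt {g h : LaurentSeries Fq} (hlt : fabs Fq h < fabs Fq g) :
    fabs Fq (g + h) = fabs Fq g :=
  IsNonarchimedean.add_eq_left_of_lt (f := fabsAbv Fq) fabs_add_le_max hlt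

lemma fabs_mul_add_eq_of_lt {y a b : LaurentSeries Fq} (hy : 1 ≤ fabs Fq y)
    (hab : fabs Fq b < fabs Fq a) : fabs Fq (y * a + b) = fabs Fq y * fabs Fq a := by
  rw [← fabs_mul]
  refine fabs_add_eq_left_of_lt (hab.trans_le ?_)
  rw [fabs_mul]
  exact le_mul_of_one_le_left (fabs_nonneg a) hy

lemma fabs_le_zpow_of_coeff_eq_zero {g : LaurentSeries Fq} {N : ℤ}
    (h : ∀ j < N, g.coeff j = 0) : fabs Fq g ≤ q ^ (-N) := by
  rcases eq_or_ne g 0 with rfl | hg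
  · rw [fabs_eq_zero_iff.2 rfl]; positivity
  have hN : N ≤ g.order :=
    not_lt.1 fun hlt => HahnSeries.coeff_order_eq_zero.not.2 hg (h _ hlt)
  rw [fabs_of_ne_zero hg]
  exact zpow_le_zpow_right₀ one_lt_card_real.le (neg_le_neg hN)

lemma fabs_eq_zpow_of_fdeg_eq {g : LaurentSeries Fq} {n : ℤ} (h : fdeg Fq g = n) :
    fabs Fq g = q ^ n := by
  have hg : g ≠ 0 := by rintro rfl; simp [fdeg] at h
  rw [fdeg, if_neg hg, WithBot.coe_inj] at h
  rw [fabs_of_ne_zero hg, h]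

lemma fabs_sub_cutoff_le (N : ℤ) (x : LaurentSeries Fq) :
    fabs Fq (x - cutoff Fq N x) ≤ q ^ (-(N + 1)) := by
  refine fabs_le_zpow_of_coeff_eq_zero fun j hj => ?_
  simp [cutoff, show j ≤ N by omega]

lemma fabs_cutoff_of_zpow_le {N : ℤ} {x : LaurentSeries Fq} (h : q ^ (-N) ≤ fabs Fq x) :
    fabs Fq (cutoff Fq N x) = fabs Fq x := by
  have htail : fabs Fq (-(x - cutoff Fq N x)) < fabs Fq x := by
    rw [fabs_neg]
    exact (fabs_sub_cutoff_le N x).trans_lt <|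
      (zpow_lt_zpow_right₀ one_lt_card_real (by omega)).trans_le h
  rw [← fabs_add_eq_left_of_lt htail, neg_sub, add_sub_cancel]

lemma fabs_polyPart_of_one_le {x : LaurentSeries Fq} (h : 1 ≤ fabs Fq x) :
    fabs Fq (polyPart Fq x) = fabs Fq x :=
  fabs_cutoff_of_zpow_le (by rwa [neg_zero, zpow_zero])

lemma fabs_fracPart_lt_one (x : LaurentSeries Fq) : fabs Fq (fracPart Fq x) < 1 :=
  (fabs_sub_cutoff_le 0 x).trans_lt (zpow_lt_one_of_neg₀ one_lt_card_real (by norm_num))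

variable {f : LaurentSeries Fq}

lemma iterate_artin_mem_setL (hfL : f ∈ setL Fq) (k : ℕ) : (artin Fq)^[k] f ∈ setL Fq := by
  cases k with
  | zero => exact hfL
  | succ k => rw [Function.iterate_succ_apply']; exact fabs_fracPart_lt_one _

lemma one_lt_fabs_inv_iterate_artin (hfL : f ∈ setL Fq) {k : ℕ} (hk : (artin Fq)^[k] f ≠ 0) :
    1 < fabs Fq ((artin Fq)^[k] f)⁻¹ := by
  rw [fabs_inv]
  exact (one_lt_inv₀ (fabs_pos_iff.2 hk)).2 (iterate_artin_mem_setL hfL k)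

lemma fabs_pquot (hfL : f ∈ setL Fq) {k : ℕ} (hk : (artin Fq)^[k] f ≠ 0) :
    fabs Fq (pquot Fq f (k + 1)) = fabs Fq ((artin Fq)^[k] f)⁻¹ :=
  fabs_polyPart_of_one_le (one_lt_fabs_inv_iterate_artin hfL hk).le

lemma fabs_Qc_lt_fabs_Qc_succ (hfL : f ∈ setL Fq) {k : ℕ} (hk : (artin Fq)^[k] f ≠ 0) :
    fabs Fq (Qc Fq f k) < fabs Fq (Qc Fq f (k + 1)) := by
  induction k with
  | zero => simp [Qc, convPQ, fabs]
  | succ k ih =>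
    have hk' := iterate_artin_ne_zero_of_le k.le_succ hk
    have hlt := ih hk'
    have hA : 1 < fabs Fq (pquot Fq f (k + 1)) :=
      fabs_pquot hfL hk' ▸ one_lt_fabs_inv_iterate_artin hfL hk'
    rw [Qc_add_two, fabs_mul_add_eq_of_lt hA.le hlt]
    exact lt_mul_of_one_lt_left ((fabs_nonneg _).trans_lt hlt) hA

lemma fabs_sub_convergent_eq (hfL : f ∈ setL Fq) {k : ℕ} (hk : (artin Fq)^[k] f ≠ 0)
    {y : LaurentSeries Fq} (hy : 1 ≤ fabs Fq y) :
    fabs Fq (f - (y * Pc Fq f (k + 1) + Pc Fq f k) / (y * Qc Fq f (k + 1) + Qc Fq f k)) =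
      fabs Fq (((artin Fq)^[k] f)⁻¹ - y) /
        (fabs Fq ((artin Fq)^[k] f)⁻¹ * fabs Fq y * fabs Fq (Qc Fq f (k + 1)) ^ 2) := by
  have hQ := fabs_Qc_lt_fabs_Qc_succ hfL hk
  have hQ1 : 0 < fabs Fq (Qc Fq f (k + 1)) := (fabs_nonneg _).trans_lt hQ
  have hx := (one_lt_fabs_inv_iterate_artin hfL hk).le
  have hDx := fabs_mul_add_eq_of_lt hx hQ
  have hDy := fabs_mul_add_eq_of_lt hy hQ
  rw [sub_div_eq_of_mul_eq (mul_complete_quotient_denom hk)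
      (fabs_pos_iff.1 (hDx ▸ mul_pos (one_pos.trans_le hx) hQ1))
      (fabs_pos_iff.1 (hDy ▸ mul_pos (one_pos.trans_le hy) hQ1)),
    Pc_mul_Qc_sub_Pc_mul_Qc, fabs_div, fabs_mul, fabs_mul, fabs_neg_one_pow, one_mul, hDx, hDy]
  ring

end Absolute

theorem geom_intermediate_convergent_bound
    (f : LaurentSeries Fq) (hfL : f ∈ setL Fq)
    (k : ℕ) (m : ℕ) (hm : fdeg Fq (pquot Fq f (k + 1)) = ((m : ℤ) : WithBot ℤ))
    (i : ℕ) (hi : i ≤ m) :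
    fabs Fq (f -
        (cutoff Fq ((i : ℤ) - (m : ℤ)) (pquot Fq f (k + 1)) * Pc Fq f (k + 1) + Pc Fq f k) /
        (cutoff Fq ((i : ℤ) - (m : ℤ)) (pquot Fq f (k + 1)) * Qc Fq f (k + 1) + Qc Fq f k))
      ≤ (Fintype.card Fq : ℝ) ^ (-(i : ℤ)) /
          (fabs Fq (Qc Fq f (k + 1)) * fabs Fq (Qc Fq f (k + 2))) := by
  set x := ((artin Fq)^[k] f)⁻¹
  set S := cutoff Fq ((i : ℤ) - m) (pquot Fq f (k + 1))
  have hk : (artin Fq)^[k] f ≠ 0 :=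
    iterate_artin_ne_zero_of_pquot_ne_zero fun h => by simp [h, fdeg] at hm
  have hq : 1 ≤ q ^ (m : ℤ) := one_le_zpow₀ one_lt_card_real.le (by positivity)
  have hA : fabs Fq (pquot Fq f (k + 1)) = q ^ (m : ℤ) := fabs_eq_zpow_of_fdeg_eq hm
  have hx : fabs Fq x = q ^ (m : ℤ) := (fabs_pquot hfL hk).symm.trans hA
  have hSx : S = cutoff Fq ((i : ℤ) - m) x := cutoff_cutoff_of_le (by omega) x
  have hS : fabs Fq S = q ^ (m : ℤ) := by
    rw [hSx, fabs_cutoff_of_zpow_le (hx ▸ zpow_le_zpow_right₀ one_lt_card_real.le (by omega)), hx]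
  have hxS : fabs Fq (x - S) ≤ q ^ (-(i : ℤ)) * q ^ (m : ℤ) := by
    rw [← zpow_add₀ (by positivity), hSx]
    exact (fabs_sub_cutoff_le _ x).trans (zpow_le_zpow_right₀ one_lt_card_real.le (by omega))
  have hQ2 : fabs Fq (Qc Fq f (k + 2)) = q ^ (m : ℤ) * fabs Fq (Qc Fq f (k + 1)) := by
    rw [Qc_add_two, fabs_mul_add_eq_of_lt (hA ▸ hq) (fabs_Qc_lt_fabs_Qc_succ hfL hk), hA]
  rw [fabs_sub_convergent_eq hfL hk (hS ▸ hq), hx, hS, hQ2]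
  calc _ ≤ q ^ (-(i : ℤ)) * q ^ (m : ℤ) /
          (q ^ (m : ℤ) * q ^ (m : ℤ) * fabs Fq (Qc Fq f (k + 1)) ^ 2) := by gcongr
    _ = _ := by field_simp

end
end
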